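/- arXiv:1808.03732 — 4 statements merged into one kernel-verified Lean document; each statement's English description precedes it below -/
import Mathlib

section
/- Let α be a transcendental real number with 0 < α ≤ 1, and let h > 0 with exp(2π/h) rational. Let P_h be the set of primes not dividing the numerator or denominator of exp(2π/h) (in lowest terms). Then for any integers (k_p)_{p ∈ P_h} and (l_m)_{m ∈ ℕ₀}, all but finitely many zero and not all zero, one has exp(-ih(Σ_p k_p log p + Σ_m l_m log(m+α))) ≠ 1. -/
/-!
Suppose `exp (-i h S) = 1`. Then `h S ∈ 2πℤ`, so `exp S` is an integral power `q ^ N` of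
`q = exp (2π / h)`, i.e. `∏ p ^ k_p · ∏ (m + α) ^ l_m = q ^ N`. Clearing denominators turns this
into a polynomial identity over `ℚ` satisfied by the transcendental `α`, hence a formal identity
in `ℚ[X]`; comparing the multiplicities of the roots `-m` forces every `l_m` to vanish. What is
left, `∏ p ^ k_p = q ^ N` in `ℚ`, is ruled out by `p`-adic valuations: a prime dividing the
numerator of `q > 1` forces `N = 0`, and then each prime `p` forces `k_p = 0`.
-/

open Function Polynomial

theorem Polynomial.count_roots_prod_X_sub_C_pow {R ι : Type*} [CommRing R] [IsDomain R]
    [DecidableEq R] {c : ι → R} (hc : Injective c) (s : Finset ι) (e : ι → ℕ) {i : ι}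
    (hi : i ∈ s) : (∏ j ∈ s, (X - C (c j)) ^ e j).roots.count (c i) = e i := by
  classical
  rw [roots_prod _ _ (Finset.prod_ne_zero_iff.2 fun j _ => pow_ne_zero _ (X_sub_C_ne_zero _)),
    Multiset.count_bind]
  simp [roots_pow, Multiset.count_singleton, hc.eq_iff, hi]

theorem Transcendental.eq_zero_of_prod_sub_zpow_eq_algebraMap {K L ι : Type*} [Field K]
    [Field L] [Algebra K L] {α : L} (hα : Transcendental K α) {c : ι → K} (hc : Injective c)
    {s : Finset ι} {e : ι → ℤ} {r : K}
    (h : ∏ i ∈ s, (α - algebraMap K L (c i)) ^ e i = algebraMap K L r) :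
    ∀ i ∈ s, e i = 0 := by
  classical
  have hne : ∀ i, α - algebraMap K L (c i) ≠ 0 := fun i h0 =>
    hα (sub_eq_zero.1 h0 ▸ isAlgebraic_algebraMap (c i))
  have hr : r ≠ 0 := by
    rintro rfl
    exact Finset.prod_ne_zero_iff.2 (fun i _ => zpow_ne_zero _ (hne i)) (h.trans (map_zero _))
  set a : ι → ℕ := fun i => (e i).toNat
  set b : ι → ℕ := fun i => (-e i).toNat
  have hsplit : ∏ i ∈ s, (α - algebraMap K L (c i)) ^ a i =
      algebraMap K L r * ∏ i ∈ s, (α - algebraMap K L (c i)) ^ b i := by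
    rw [← h, ← div_eq_iff (Finset.prod_ne_zero_iff.2 fun i _ => pow_ne_zero _ (hne i)),
      ← Finset.prod_div_distrib]
    refine Finset.prod_congr rfl fun i _ => ?_
    rw [← zpow_natCast, ← zpow_natCast, ← zpow_sub₀ (hne i), Int.toNat_sub_toNat_neg]
  have hpoly : ∏ i ∈ s, (X - C (c i)) ^ a i = C r * ∏ i ∈ s, (X - C (c i)) ^ b i := by
    rw [← sub_eq_zero]
    refine transcendental_iff.1 hα _ ?_
    simpa [sub_eq_zero] using hsplit
  intro i hi
  have hmult := congrArg (fun p => p.roots.count (c i)) hpoly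
  simp only [roots_C_mul _ hr, count_roots_prod_X_sub_C_pow hc s _ hi, a, b] at hmult
  omega

theorem Transcendental.eq_zero_of_prod_natCast_add_zpow_eq_ratCast {L : Type*} [Field L]
    [CharZero L] {α : L} (hα : Transcendental ℚ α) {s : Finset ℕ} {e : ℕ → ℤ} {r : ℚ}
    (h : ∏ m ∈ s, ((m : L) + α) ^ e m = r) : ∀ m ∈ s, e m = 0 := by
  refine hα.eq_zero_of_prod_sub_zpow_eq_algebraMap (c := fun m : ℕ => -(m : ℚ))
    (fun m m' hm => by simpa using hm) (r := r) ?_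
  simpa only [map_neg, map_natCast, sub_neg_eq_add, eq_ratCast, add_comm] using h

theorem padicValRat_prod_prime_zpow {t : ℕ} [Fact t.Prime] {s : Finset ℕ}
    (hs : ∀ p ∈ s, p.Prime) (k : ℕ → ℤ) :
    padicValRat t (∏ p ∈ s, (p : ℚ) ^ k p) = if t ∈ s then k t else 0 := by
  classical
  induction s using Finset.induction_on with
  | empty => simp
  | @insert p s hp ih =>
    have hpp : Fact p.Prime := ⟨hs p (s.mem_insert_self p)⟩
    have hprod : ∏ p ∈ s, (p : ℚ) ^ k p ≠ 0 :=
      Finset.prod_ne_zero_iff.2 fun p' hp' =>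
        zpow_ne_zero _ (by exact_mod_cast (hs p' (Finset.mem_insert_of_mem hp')).ne_zero)
    rw [Finset.prod_insert hp,
      padicValRat.mul (zpow_ne_zero _ (by exact_mod_cast hpp.out.ne_zero)) hprod,
      padicValRat.zpow, ih fun p' hp' => hs p' (Finset.mem_insert_of_mem hp'),
      padicValRat.of_nat]
    by_cases htp : t = p
    · subst htp
      simp [padicValNat_self, hp]
    · simp [padicValNat_primes htp, htp]

theorem padicValRat_pos_of_dvd_num {t : ℕ} [Fact t.Prime] {q : ℚ} (hq : q ≠ 0)
    (ht : (t : ℤ) ∣ q.num) : 0 < padicValRat t q := by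
  have hden : padicValNat t q.den = 0 := padicValNat.eq_zero_of_not_dvd fun htd =>
    (Fact.out : t.Prime).one_lt.ne'
      (Nat.dvd_one.1 (q.reduced ▸ Nat.dvd_gcd (Int.natCast_dvd.1 ht) htd))
  have hnum : 1 ≤ padicValInt t q.num :=
    one_le_padicValNat_of_dvd (by simpa using hq) (Int.natCast_dvd.1 ht)
  rw [padicValRat, hden]
  omega

theorem Rat.exists_prime_dvd_num_of_one_lt {q : ℚ} (hq : 1 < q) :
    ∃ t : ℕ, t.Prime ∧ (t : ℤ) ∣ q.num := by
  have hnum : q.num.natAbs ≠ 1 := by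
    intro h1
    have hnum1 : q.num = 1 := by have := Rat.num_pos.2 (one_pos.trans hq); omega
    have hle : q ≤ 1 := by
      rw [← Rat.num_div_den q, hnum1, Int.cast_one]
      exact div_le_one_of_le₀ (by exact_mod_cast q.pos) (by positivity)
    exact hle.not_gt hq
  obtain ⟨t, ht, htd⟩ := Nat.exists_prime_and_dvd hnum
  exact ⟨t, ht, Int.natCast_dvd.2 htd⟩

theorem eq_zero_of_prod_prime_zpow_eq_zpow {q : ℚ} (hq : 1 < q) {s : Finset ℕ}
    (hs : ∀ p ∈ s, p.Prime ∧ ¬(p : ℤ) ∣ q.num) {k : ℕ → ℤ} {N : ℤ}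
    (h : ∏ p ∈ s, (p : ℚ) ^ k p = q ^ N) : ∀ p ∈ s, k p = 0 := by
  have hprime : ∀ p ∈ s, p.Prime := fun p hp => (hs p hp).1
  obtain ⟨t, ht, htq⟩ := Rat.exists_prime_dvd_num_of_one_lt hq
  have : Fact t.Prime := ⟨ht⟩
  have hN : N = 0 := by
    have hval := congrArg (padicValRat t) h
    rw [padicValRat_prod_prime_zpow hprime, if_neg fun hts => (hs t hts).2 htq,
      padicValRat.zpow] at hval
    exact (mul_eq_zero.1 hval.symm).resolve_right
      (padicValRat_pos_of_dvd_num (one_pos.trans hq).ne' htq).ne'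
  intro p hp
  have : Fact p.Prime := ⟨hprime p hp⟩
  have hval := congrArg (padicValRat p) h
  rwa [padicValRat_prod_prime_zpow hprime, if_pos hp, hN, zpow_zero, padicValRat.one] at hval

theorem exists_exp_eq_zpow_of_cexp_neg_I_mul_eq_one {h S : ℝ} (hh : h ≠ 0)
    (H : Complex.exp (-Complex.I * h * S) = 1) :
    ∃ N : ℤ, Real.exp S = Real.exp (2 * Real.pi / h) ^ N := by
  obtain ⟨n, hn⟩ := Complex.exp_eq_one_iff.1 H
  have hS : h * S + n * (2 * Real.pi) = 0 := by
    have : ((h * S + n * (2 * Real.pi) : ℝ) : ℂ) * Complex.I = 0 := by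
      push_cast
      linear_combination -hn
    exact_mod_cast (mul_eq_zero.1 this).resolve_right Complex.I_ne_zero
  refine ⟨-n, ?_⟩
  rw [← Real.rpow_intCast, ← Real.exp_mul]
  congr 1
  field_simp
  push_cast
  linarith

theorem exp_finsum_intCast_mul_log {ι : Type*} {f : ι → ℤ} (hf : (support f).Finite)
    {x : ι → ℝ} (hx : ∀ i, f i ≠ 0 → 0 < x i) :
    Real.exp (∑ᶠ i, (f i : ℝ) * Real.log (x i)) = ∏ i ∈ hf.toFinset, x i ^ f i := by
  rw [finsum_eq_sum_of_support_subset _ (s := hf.toFinset) fun i hi => by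
    simpa using left_ne_zero_of_mul hi, Real.exp_sum]
  refine Finset.prod_congr rfl fun i hi => ?_
  rw [mul_comm, Real.exp_mul, Real.exp_log (hx i (by simpa using hi)), Real.rpow_intCast]

theorem stmt_1_general (α : ℝ) (hα : Transcendental ℚ α) (hα0 : 0 < α)
    (h : ℝ) (hh : 0 < h) (q : ℚ) (hq : Real.exp (2 * Real.pi / h) = (q : ℝ))
    (k l : ℕ → ℤ)
    (hkfin : (Function.support k).Finite) (hlfin : (Function.support l).Finite)
    (hksupp : ∀ p, k p ≠ 0 → Nat.Prime p ∧ ¬ (p : ℤ) ∣ q.num * (q.den : ℤ))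
    (hnontriv : (∃ p, k p ≠ 0) ∨ (∃ m, l m ≠ 0)) :
    Complex.exp (-Complex.I * h *
      ((∑ᶠ p : ℕ, (k p : ℝ) * Real.log p) + ∑ᶠ m : ℕ, (l m : ℝ) * Real.log (m + α))) ≠ 1 := by
  intro H
  rw [← Complex.ofReal_add] at H
  obtain ⟨N, hN⟩ := exists_exp_eq_zpow_of_cexp_neg_I_mul_eq_one hh.ne' H
  have hq1 : 1 < q := by exact_mod_cast hq ▸ Real.one_lt_exp_iff.2 (by positivity)
  rw [hq, Real.exp_add,
    exp_finsum_intCast_mul_log hkfin fun p hp => by exact_mod_cast (hksupp p hp).1.pos,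
    exp_finsum_intCast_mul_log hlfin fun m _ => by positivity] at hN
  have hPk : ∏ p ∈ hkfin.toFinset, (p : ℝ) ^ k p ≠ 0 :=
    Finset.prod_ne_zero_iff.2 fun p hp =>
      zpow_ne_zero _ (by exact_mod_cast (hksupp p (by simpa using hp)).1.ne_zero)
  have hl : ∀ m ∈ hlfin.toFinset, l m = 0 := by
    refine hα.eq_zero_of_prod_natCast_add_zpow_eq_ratCast
      (r := q ^ N / ∏ p ∈ hkfin.toFinset, (p : ℚ) ^ k p) ?_
    push_cast
    rw [eq_div_iff hPk, ← hN, mul_comm]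
  have hk : ∀ p ∈ hkfin.toFinset, k p = 0 := by
    refine eq_zero_of_prod_prime_zpow_eq_zpow hq1 (fun p hp => ?_) (N := N) ?_
    · obtain ⟨hp, hpq⟩ := hksupp p (by simpa using hp)
      exact ⟨hp, fun hd => hpq (hd.mul_right _)⟩
    · rw [Finset.prod_eq_one (s := hlfin.toFinset) fun m hm => by rw [hl m hm, zpow_zero],
        mul_one] at hN
      exact Rat.cast_injective (α := ℝ) (by push_cast; exact hN)
  obtain ⟨p, hp⟩ | ⟨m, hm⟩ := hnontriv
  · exact hp (hk p (by simpa using hp))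
  · exact hm (hl m (by simpa using hm))

theorem stmt_1 (α : ℝ) (hα : Transcendental ℚ α) (hα0 : 0 < α) (hα1 : α ≤ 1)
    (h : ℝ) (hh : 0 < h) (q : ℚ) (hq : Real.exp (2 * Real.pi / h) = (q : ℝ))
    (k l : ℕ → ℤ)
    (hkfin : (Function.support k).Finite) (hlfin : (Function.support l).Finite)
    (hksupp : ∀ p, k p ≠ 0 → Nat.Prime p ∧ ¬ (p : ℤ) ∣ q.num * (q.den : ℤ))
    (hnontriv : (∃ p, k p ≠ 0) ∨ (∃ m, l m ≠ 0)) :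
    Complex.exp (-Complex.I * h *
      ((∑ᶠ p : ℕ, (k p : ℝ) * Real.log p) + ∑ᶠ m : ℕ, (l m : ℝ) * Real.log (m + α))) ≠ 1 :=
  stmt_1_general α hα hα0 h hh q hq k l hkfin hlfin hksupp hnontriv
end

section
/- Let α be transcendental with 0 < α ≤ 1, and suppose (k_p) are integers indexed by all primes and (l_m) integers indexed by ℕ₀, almost all zero, such that ∏_p p^{k_p} · ∏_m (m+α)^{l_m} is a rational number. If some l_m ≠ 0, this yields a contradiction; hence all l_m = 0. -/
open Polynomial

theorem stmt_2 (α : ℝ) (hα : Transcendental ℚ α) (hα0 : 0 < α) (hα1 : α ≤ 1)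
    (k l : ℕ → ℤ)
    (hkfin : (Function.support k).Finite) (hlfin : (Function.support l).Finite)
    (hksupp : ∀ p, k p ≠ 0 → Nat.Prime p)
    (q : ℚ)
    (hval : (∏ᶠ p : ℕ, (p : ℝ) ^ (k p)) * (∏ᶠ m : ℕ, ((m : ℝ) + α) ^ (l m)) = (q : ℝ)) :
    ∀ m, l m = 0 := by
  by_contra hcon
  push_neg at hcon
  obtain ⟨m₀, hm₀⟩ := hcon
  set Sk := hkfin.toFinset with hSk
  set Sl := hlfin.toFinset with hSl
  have hm₀Sl : m₀ ∈ Sl := hlfin.mem_toFinset.mpr hm₀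
  -- finprods as finset prods
  have hPfin : (∏ᶠ p : ℕ, (p : ℝ) ^ (k p)) = ∏ p ∈ Sk, (p : ℝ) ^ (k p) := by
    apply finprod_eq_prod_of_mulSupport_subset
    intro p hp
    simp only [Function.mem_mulSupport] at hp
    simp only [hSk, Set.Finite.coe_toFinset, Function.mem_support]
    intro h0; exact hp (by rw [h0, zpow_zero])
  have hQfin : (∏ᶠ m : ℕ, ((m : ℝ) + α) ^ (l m)) = ∏ m ∈ Sl, ((m : ℝ) + α) ^ (l m) := by
    apply finprod_eq_prod_of_mulSupport_subset
    intro m hm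
    simp only [Function.mem_mulSupport] at hm
    simp only [hSl, Set.Finite.coe_toFinset, Function.mem_support]
    intro h0; exact hm (by rw [h0, zpow_zero])
  set P : ℝ := ∏ p ∈ Sk, (p : ℝ) ^ (k p) with hPdef
  set Q : ℝ := ∏ m ∈ Sl, ((m : ℝ) + α) ^ (l m) with hQdef
  have hval' : P * Q = (q : ℝ) := by rw [← hPfin, ← hQfin]; exact hval
  have hbase : ∀ m : ℕ, (0:ℝ) < (m : ℝ) + α := by
    intro m; positivity
  have hPpos : 0 < P := by
    apply Finset.prod_pos
    intro p hp
    have hpprime : Nat.Prime p := hksupp p (hkfin.mem_toFinset.mp hp)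
    have : (0:ℝ) < p := by exact_mod_cast hpprime.pos
    positivity
  have hQpos : 0 < Q := by
    apply Finset.prod_pos
    intro m _
    have := hbase m
    positivity
  have hqR : (0:ℝ) < (q:ℝ) := by rw [← hval']; exact mul_pos hPpos hQpos
  -- rational value of P
  set qP : ℚ := ∏ p ∈ Sk, (p : ℚ) ^ (k p) with hqPdef
  have hqPcast : ((qP : ℚ) : ℝ) = P := by
    rw [hqPdef, hPdef]
    push_cast
    rfl
  have hqPne : qP ≠ 0 := by
    intro h0
    rw [h0] at hqPcast
    simp at hqPcast
    rw [← hqPcast] at hPpos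
    exact lt_irrefl 0 hPpos
  set c : ℚ := q / qP with hcdef
  have hcne : c ≠ 0 := by
    have hq0 : q ≠ 0 := by
      intro h0; rw [h0] at hqR; simp at hqR
    exact div_ne_zero hq0 hqPne
  have hcQ : ((c : ℚ) : ℝ) = Q := by
    rw [hcdef]
    push_cast
    rw [hqPcast]
    field_simp
    linarith [hval']
  -- polynomials
  set A : ℚ[X] := ∏ m ∈ Sl, (X + C (m : ℚ)) ^ (l m).toNat with hAdef
  set B : ℚ[X] := ∏ m ∈ Sl, (X + C (m : ℚ)) ^ (-(l m)).toNat with hBdef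
  have haevalA : (aeval α) A = ∏ m ∈ Sl, ((m : ℝ) + α) ^ ((l m).toNat : ℤ) := by
    rw [hAdef, map_prod]
    apply Finset.prod_congr rfl
    intro m _
    rw [map_pow, map_add, aeval_X, aeval_C, zpow_natCast]
    push_cast
    ring
  have haevalB : (aeval α) B = ∏ m ∈ Sl, ((m : ℝ) + α) ^ ((-(l m)).toNat : ℤ) := by
    rw [hBdef, map_prod]
    apply Finset.prod_congr rfl
    intro m _
    rw [map_pow, map_add, aeval_X, aeval_C, zpow_natCast]
    push_cast
    ring
  have hAQB : (aeval α) A = Q * (aeval α) B := by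
    rw [haevalA, haevalB, hQdef, ← Finset.prod_mul_distrib]
    apply Finset.prod_congr rfl
    intro m _
    rw [← zpow_add₀ (ne_of_gt (hbase m))]
    congr 1
    omega
  set F : ℚ[X] := A - C c * B with hFdef
  have hF0 : (aeval α) F = 0 := by
    rw [hFdef, map_sub, map_mul, aeval_C, hAQB]
    rw [show ((algebraMap ℚ ℝ) c) = ((c:ℚ):ℝ) from rfl, hcQ]
    ring
  have hFne : F ≠ 0 := by
    intro hF
    have hAB : A = C c * B := by
      have := sub_eq_zero.mp (hFdef ▸ hF)
      exact this
    -- evaluate at -(m₀ : ℚ)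
    set x₀ : ℚ := -(m₀ : ℚ) with hx₀
    have hevalA : A.eval x₀ = ∏ m ∈ Sl, ((m : ℚ) - (m₀ : ℚ)) ^ (l m).toNat := by
      rw [hAdef, eval_prod]
      apply Finset.prod_congr rfl
      intro m _
      rw [eval_pow, eval_add, eval_X, eval_C, hx₀]
      ring_nf
    have hevalB : B.eval x₀ = ∏ m ∈ Sl, ((m : ℚ) - (m₀ : ℚ)) ^ (-(l m)).toNat := by
      rw [hBdef, eval_prod]
      apply Finset.prod_congr rfl
      intro m _
      rw [eval_pow, eval_add, eval_X, eval_C, hx₀]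
      ring_nf
    have hne : ∀ m : ℕ, m ≠ m₀ → ((m : ℚ) - (m₀ : ℚ)) ≠ 0 := by
      intro m hm h0
      apply hm
      have : (m : ℚ) = (m₀ : ℚ) := by linarith
      exact_mod_cast this
    have hAB' : A.eval x₀ = c * B.eval x₀ := by
      rw [hAB]; simp [eval_mul]
    rcases lt_or_gt_of_ne hm₀ with hneg | hpos
    · -- l m₀ < 0 : eval B = 0, eval A ≠ 0
      have hB0 : B.eval x₀ = 0 := by
        rw [hevalB]
        apply Finset.prod_eq_zero hm₀Sl
        rw [sub_self]
        exact zero_pow (by omega)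
      have hA0 : A.eval x₀ ≠ 0 := by
        rw [hevalA]
        apply Finset.prod_ne_zero_iff.mpr
        intro m _
        by_cases hm : m = m₀
        · rw [hm, sub_self]
          have : (l m₀).toNat = 0 := by omega
          rw [this, pow_zero]; exact one_ne_zero
        · exact pow_ne_zero _ (hne m hm)
      rw [hB0, mul_zero] at hAB'
      exact hA0 hAB'
    · -- l m₀ > 0 : eval A = 0, eval B ≠ 0
      have hA0 : A.eval x₀ = 0 := by
        rw [hevalA]
        apply Finset.prod_eq_zero hm₀Sl
        rw [sub_self]
        exact zero_pow (by omega)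
      have hB0 : B.eval x₀ ≠ 0 := by
        rw [hevalB]
        apply Finset.prod_ne_zero_iff.mpr
        intro m _
        by_cases hm : m = m₀
        · rw [hm, sub_self]
          have : (-(l m₀)).toNat = 0 := by omega
          rw [this, pow_zero]; exact one_ne_zero
        · exact pow_ne_zero _ (hne m hm)
      rw [hA0] at hAB'
      exact mul_ne_zero hcne hB0 hAB'.symm
  exact hα ⟨F, hFne, hF0⟩
end

section
/- Let α ∈ (0,1] be transcendental. Then the real numbers log(m+α), for m ranging over ℕ₀, are linearly independent over ℚ. -/
/-!
Since every `m + α` is positive, a vanishing integer combination `∑ gₘ log (m + α)` says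
`∏ (α + m) ^ gₘ = 1`. Moving the negative exponents to the other side gives `P(α) = Q(α)` for two
products `P`, `Q` of powers of the distinct linear polynomials `X + m`; as `α` is transcendental,
`P = Q`, and comparing root multiplicities gives `gₘ = 0`. Independence over `ℤ` then gives
independence over `ℚ` by clearing denominators.
-/

open Polynomial Finset

namespace Polynomial

variable {R : Type*} [CommRing R] [IsDomain R] [DecidableEq R] {ι : Type*}

theorem count_roots_prod_X_sub_C_pow_s7 {c : ι → R} (hc : Function.Injective c) (s : Finset ι)
    (n : ι → ℕ) {i : ι} (hi : i ∈ s) :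
    (∏ j ∈ s, (X - C (c j)) ^ n j).roots.count (c i) = n i := by
  classical
  have hne : ∏ j ∈ s, (X - C (c j)) ^ n j ≠ 0 :=
    (monic_prod_of_monic _ _ fun j _ => (monic_X_sub_C _).pow _).ne_zero
  simp only [roots_prod _ _ hne, roots_pow, roots_X_sub_C, Multiset.count_bind,
    Multiset.count_nsmul, Multiset.count_singleton, hc.eq_iff, Finset.sum_map_val, mul_ite,
    mul_one, mul_zero, Finset.sum_ite_eq, if_pos hi]

end Polynomial

theorem Transcendental.eq_zero_of_prod_sub_zpow_eq_one {F K : Type*} [Field F] [Field K]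
    [Algebra F K] {x : K} (hx : Transcendental F x) {ι : Type*} {c : ι → F}
    (hc : Function.Injective c) {s : Finset ι} {g : ι → ℤ}
    (hg : ∏ j ∈ s, (x - algebraMap F K (c j)) ^ g j = 1) : ∀ i ∈ s, g i = 0 := by
  classical
  have hne (j : ι) : x - algebraMap F K (c j) ≠ 0 := fun h =>
    hx (sub_eq_zero.mp h ▸ isAlgebraic_algebraMap (c j))
  let P (n : ι → ℕ) : F[X] := ∏ j ∈ s, (X - C (c j)) ^ n j
  have aeval_P (n : ι → ℕ) :
      Polynomial.aeval x (P n) = ∏ j ∈ s, (x - algebraMap F K (c j)) ^ n j := by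
    simp [P, map_prod]
  let a (j : ι) : ℕ := (g j).toNat
  let b (j : ι) : ℕ := (-g j).toNat
  have hab (j : ι) : g j = a j - b j := by simp only [a, b]; omega
  have hPab : P a = P b := by
    apply (transcendental_iff_injective.mp hx)
    rw [aeval_P, aeval_P,
      ← div_eq_one_iff_eq (prod_ne_zero_iff.mpr fun j _ => pow_ne_zero _ (hne j)),
      ← prod_div_distrib, ← hg]
    refine prod_congr rfl fun j _ => ?_
    rw [hab j, zpow_sub₀ (hne j), zpow_natCast, zpow_natCast]
  intro i hi
  have : (P a).roots.count (c i) = (P b).roots.count (c i) := by rw [hPab]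
  rw [count_roots_prod_X_sub_C_pow_s7 hc s a hi, count_roots_prod_X_sub_C_pow_s7 hc s b hi] at this
  rw [hab i, this, sub_self]

theorem Real.linearIndependent_int_log {ι : Type*} {y : ι → ℝ} (hy : ∀ i, 0 < y i)
    (h : ∀ (s : Finset ι) (g : ι → ℤ), ∏ i ∈ s, y i ^ g i = 1 → ∀ i ∈ s, g i = 0) :
    LinearIndependent ℤ (fun i => Real.log (y i)) := by
  refine linearIndependent_iff'.mpr fun s g hg => h s g ?_
  have hpos : 0 < ∏ i ∈ s, y i ^ g i := prod_pos fun i _ => zpow_pos (hy i) _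
  rw [← Real.exp_log hpos, Real.log_prod fun i _ => (zpow_pos (hy i) _).ne', ← Real.exp_zero,
    ← hg]
  simp [Real.log_zpow]

theorem stmt_7_general (α : ℝ) (hα : Transcendental ℚ α) (hα0 : 0 < α) :
    LinearIndependent ℚ (fun m : ℕ => Real.log ((m : ℝ) + α)) := by
  rw [← LinearIndependent.iff_fractionRing ℤ ℚ]
  refine Real.linearIndependent_int_log (fun m => by positivity) fun s g hg => ?_
  refine hα.eq_zero_of_prod_sub_zpow_eq_one (c := fun m : ℕ => -(m : ℚ)) ?_ ?_
  · exact neg_injective.comp Nat.cast_injective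
  · simpa [add_comm] using hg

theorem stmt_7 (α : ℝ) (hα : Transcendental ℚ α) (hα0 : 0 < α) (hα1 : α ≤ 1) :
    LinearIndependent ℚ (fun m : ℕ => Real.log ((m : ℝ) + α)) :=
  stmt_7_general α hα hα0
end

section
/- Let α be transcendental with 0 < α ≤ 1 and h > 0 with exp(2π/h) rational; let P_h be the primes coprime to the numerator and denominator of exp(2π/h). Then for integers k_p (p ∈ P_h) and l_m (m ∈ ℕ₀), almost all zero, and an integer r, the equation Σ_p k_p log p + Σ_m l_m log(m+α) = 2πr/h forces all k_p = l_m = 0 and r = 0. -/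
open Polynomial in
lemma aux_trans9 (α : ℝ) (hα : Transcendental ℚ α) (hα0 : 0 < α)
    (S : Finset ℕ) (l : ℕ → ℤ) (c : ℚ) (hc : c ≠ 0)
    (hprod : ∏ m ∈ S, ((m : ℝ) + α) ^ (l m) = (c : ℝ)) :
    ∀ m ∈ S, l m = 0 := by
  have hpos : ∀ m : ℕ, (0:ℝ) < (m:ℝ) + α := fun m => by positivity
  set P : ℚ[X] := ∏ m ∈ S, (X + C (m:ℚ)) ^ (l m).toNat with hP
  set Q : ℚ[X] := ∏ m ∈ S, (X + C (m:ℚ)) ^ (-l m).toNat with hQ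
  have hsplit : ∀ m : ℕ, ((m:ℝ) + α) ^ (l m) =
      ((m:ℝ) + α) ^ (l m).toNat / ((m:ℝ) + α) ^ (-l m).toNat := by
    intro m
    rcases le_or_gt 0 (l m) with hl | hl
    · have h1 : (-l m).toNat = 0 := by omega
      have h2 : ((l m).toNat : ℤ) = l m := Int.toNat_of_nonneg hl
      rw [h1, pow_zero, div_one, ← zpow_natCast, h2]
    · have h1 : (l m).toNat = 0 := by omega
      have h2 : ((-l m).toNat : ℤ) = -l m := Int.toNat_of_nonneg (by omega)
      rw [h1, pow_zero, ← zpow_natCast, h2, one_div, ← zpow_neg, neg_neg]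
  have haevalP : (aeval α) P = ∏ m ∈ S, ((m:ℝ) + α) ^ (l m).toNat := by
    rw [hP, map_prod]
    exact Finset.prod_congr rfl fun m _ => by simp [add_comm]
  have haevalQ : (aeval α) Q = ∏ m ∈ S, ((m:ℝ) + α) ^ (-l m).toNat := by
    rw [hQ, map_prod]
    exact Finset.prod_congr rfl fun m _ => by simp [add_comm]
  have hQpos : (0:ℝ) < (aeval α) Q := by
    rw [haevalQ]; exact Finset.prod_pos fun m _ => pow_pos (hpos m) _
  have hkey : (aeval α) P = (c:ℝ) * (aeval α) Q := by
    rw [haevalP, haevalQ, ← hprod]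
    rw [Finset.prod_congr rfl fun m _ => hsplit m, Finset.prod_div_distrib]
    rw [haevalQ] at hQpos
    field_simp
  have hzero : (aeval α) (P - C c * Q) = 0 := by
    simp [hkey, mul_comm]
  have hPQ : P = C c * Q := by
    by_contra hne
    exact hα ⟨P - C c * Q, sub_ne_zero.mpr hne, hzero⟩
  intro m hm
  by_contra hlm
  have hevP : eval (-(m:ℚ)) P = ∏ m' ∈ S, (-(m:ℚ) + m') ^ (l m').toNat := by
    simp [hP, eval_prod]
  have hevQ : eval (-(m:ℚ)) Q = ∏ m' ∈ S, (-(m:ℚ) + m') ^ (-l m').toNat := by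
    simp [hQ, eval_prod]
  have hPQev : eval (-(m:ℚ)) P = c * eval (-(m:ℚ)) Q := by
    rw [hPQ]; simp
  have hmm : (-(m:ℚ) + m) = 0 := by ring
  rcases lt_or_gt_of_ne hlm with hneg | hpos'
  · have hQ0 : eval (-(m:ℚ)) Q = 0 := by
      rw [hevQ]
      refine Finset.prod_eq_zero hm ?_
      rw [hmm, zero_pow (by omega)]
    have hP0 : eval (-(m:ℚ)) P = 0 := by rw [hPQev, hQ0, mul_zero]
    rw [hevP, Finset.prod_eq_zero_iff] at hP0
    obtain ⟨m', hm', hpow⟩ := hP0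
    obtain ⟨hbase, hexp⟩ := pow_eq_zero_iff'.mp hpow
    have : m' = m := by
      have : (m':ℚ) = m := by linarith [hbase]
      exact_mod_cast this
    rw [this] at hexp
    omega
  · have hP0 : eval (-(m:ℚ)) P = 0 := by
      rw [hevP]
      refine Finset.prod_eq_zero hm ?_
      rw [hmm, zero_pow (by omega)]
    have hQ0 : eval (-(m:ℚ)) Q = 0 := by
      rw [hPQev] at hP0
      rcases mul_eq_zero.mp hP0 with h | h
      · exact absurd h hc
      · exact h
    rw [hevQ, Finset.prod_eq_zero_iff] at hQ0
    obtain ⟨m', hm', hpow⟩ := hQ0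
    obtain ⟨hbase, hexp⟩ := pow_eq_zero_iff'.mp hpow
    have : m' = m := by
      have : (m':ℚ) = m := by linarith [hbase]
      exact_mod_cast this
    rw [this] at hexp
    omega


lemma padic_zpow9 (p : ℕ) [hp : Fact p.Prime] {q : ℚ} (hq : q ≠ 0) (n : ℤ) :
    padicValRat p (q ^ n) = n * padicValRat p q := by
  obtain ⟨n⟩ | ⟨n⟩ := n
  · rw [Int.ofNat_eq_natCast, zpow_natCast, padicValRat.pow q]
  · rw [zpow_negSucc, padicValRat.inv, padicValRat.pow q]
    rw [Int.negSucc_eq]; push_cast; ring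

lemma padic_prod9 (p : ℕ) [hp : Fact p.Prime] (T : Finset ℕ) (f : ℕ → ℚ)
    (hf : ∀ i ∈ T, f i ≠ 0) :
    padicValRat p (∏ i ∈ T, f i) = ∑ i ∈ T, padicValRat p (f i) := by
  classical
  induction T using Finset.induction_on with
  | empty => simp
  | insert _ _ hnotmem ih =>
    rename_i a s
    rw [Finset.prod_insert hnotmem, Finset.sum_insert hnotmem,
      padicValRat.mul (hf a (Finset.mem_insert_self a s))
        (Finset.prod_ne_zero_iff.mpr fun i hi => hf i (Finset.mem_insert_of_mem hi)),
      ih fun i hi => hf i (Finset.mem_insert_of_mem hi)]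

lemma aux_val9 (q : ℚ) (hq0 : q ≠ 0) (T : Finset ℕ) (k : ℕ → ℤ)
    (hT : ∀ p ∈ T, Nat.Prime p ∧ ¬ (p : ℤ) ∣ q.num * (q.den : ℤ)) (r : ℤ)
    (hprod : ∏ p ∈ T, (p : ℚ) ^ (k p) = q ^ r) :
    ∀ p ∈ T, k p = 0 := by
  intro p0 hp0
  obtain ⟨hprime, hdvd⟩ := hT p0 hp0
  haveI : Fact p0.Prime := ⟨hprime⟩
  have hne : ∀ p ∈ T, ((p:ℚ) ^ (k p)) ≠ 0 := fun p hp =>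
    zpow_ne_zero _ (Nat.cast_ne_zero.mpr (hT p hp).1.ne_zero)
  have hval := congrArg (padicValRat p0) hprod
  rw [padic_prod9, padic_zpow9 p0 hq0] at hval
  · -- RHS valuation of q is 0
    have hnum : ¬ (p0:ℤ) ∣ q.num := fun h => hdvd (h.mul_right _)
    have hden : ¬ p0 ∣ q.den := by
      intro h
      exact hdvd (Dvd.dvd.mul_left (Int.natCast_dvd_natCast.mpr h) _)
    have hvq : padicValRat p0 q = 0 := by
      rw [padicValRat]
      rw [padicValInt.eq_zero_of_not_dvd hnum, padicValNat.eq_zero_of_not_dvd hden]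
      simp
    rw [hvq, mul_zero] at hval
    have hsum : ∑ p ∈ T, padicValRat p0 ((p:ℚ) ^ (k p)) = k p0 := by
      rw [Finset.sum_eq_single p0]
      · rw [padic_zpow9 p0 (Nat.cast_ne_zero.mpr hprime.ne_zero : (p0:ℚ) ≠ 0)]
        rw [padicValRat.self hprime.one_lt, mul_one]
      · intro p hp hpne
        rw [padic_zpow9 p0 (Nat.cast_ne_zero.mpr (hT p hp).1.ne_zero : (p:ℚ) ≠ 0)]
        have : padicValRat p0 (p:ℚ) = 0 := by
          rw [padicValRat.of_nat]
          rw [padicValNat.eq_zero_of_not_dvd]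
          · simp
          · intro hdv
            exact hpne (((Nat.prime_dvd_prime_iff_eq hprime (hT p hp).1).mp hdv).symm)
        rw [this, mul_zero]
      · intro h
        exact absurd hp0 h
    rw [hsum] at hval
    exact hval
  · exact hne


theorem stmt_9 (α : ℝ) (hα : Transcendental ℚ α) (hα0 : 0 < α) (hα1 : α ≤ 1)
    (h : ℝ) (hh : 0 < h) (q : ℚ) (hq : Real.exp (2 * Real.pi / h) = (q : ℝ))
    (k l : ℕ → ℤ)
    (hkfin : (Function.support k).Finite) (hlfin : (Function.support l).Finite)
    (hksupp : ∀ p, k p ≠ 0 → Nat.Prime p ∧ ¬ (p : ℤ) ∣ q.num * (q.den : ℤ))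
    (r : ℤ)
    (heq : (∑ᶠ p : ℕ, (k p : ℝ) * Real.log p) + (∑ᶠ m : ℕ, (l m : ℝ) * Real.log ((m : ℝ) + α))
      = 2 * Real.pi * r / h) :
    (∀ p, k p = 0) ∧ (∀ m, l m = 0) ∧ r = 0 := by
  classical
  have hπ : 0 < 2 * Real.pi / h := by positivity
  have hq1 : (1:ℝ) < (q:ℝ) := by rw [← hq]; exact Real.one_lt_exp_iff.mpr hπ
  have hq1' : (1:ℚ) < q := by exact_mod_cast hq1
  have hq0 : q ≠ 0 := by positivity
  have hqR0 : (0:ℝ) < (q:ℝ) := by linarith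
  have hlogq : Real.log q = 2 * Real.pi / h := by rw [← hq, Real.log_exp]
  set Tk := hkfin.toFinset with hTk
  set Tl := hlfin.toFinset with hTl
  have hkmem : ∀ p ∈ Tk, k p ≠ 0 := fun p hp => hkfin.mem_toFinset.mp hp
  have hlmem : ∀ m ∈ Tl, l m ≠ 0 := fun m hm => hlfin.mem_toFinset.mp hm
  have hppos : ∀ p ∈ Tk, (0:ℝ) < p := fun p hp =>
    Nat.cast_pos.mpr (hksupp p (hkmem p hp)).1.pos
  have hmpos : ∀ m : ℕ, (0:ℝ) < (m:ℝ) + α := fun m => by positivity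
  -- rewrite finsums
  have h1 : (∑ᶠ p : ℕ, (k p : ℝ) * Real.log p) = ∑ p ∈ Tk, (k p : ℝ) * Real.log p := by
    apply finsum_eq_sum_of_support_subset
    intro p hp
    rw [hTk, Set.Finite.coe_toFinset]
    intro hk0
    apply hp
    simp [Function.mem_support.mp, hk0]
  have h2 : (∑ᶠ m : ℕ, (l m : ℝ) * Real.log ((m:ℝ) + α))
      = ∑ m ∈ Tl, (l m : ℝ) * Real.log ((m:ℝ) + α) := by
    apply finsum_eq_sum_of_support_subset
    intro m hm
    rw [hTl, Set.Finite.coe_toFinset]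
    intro hl0
    apply hm
    simp [Function.mem_support.mp, hl0]
  rw [h1, h2] at heq
  have hrhs : 2 * Real.pi * r / h = (r:ℝ) * Real.log q := by rw [hlogq]; ring
  rw [hrhs] at heq
  have hk1 : ∑ p ∈ Tk, (k p:ℝ) * Real.log p = Real.log (∏ p ∈ Tk, (p:ℝ) ^ (k p)) := by
    rw [Real.log_prod (fun p hp => (zpow_ne_zero _ (hppos p hp).ne'))]
    exact Finset.sum_congr rfl fun p hp => (Real.log_zpow _ _).symm
  have hl1 : ∑ m ∈ Tl, (l m:ℝ) * Real.log ((m:ℝ)+α)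
      = Real.log (∏ m ∈ Tl, ((m:ℝ)+α) ^ (l m)) := by
    rw [Real.log_prod (fun m hm => (zpow_ne_zero _ (hmpos m).ne'))]
    exact Finset.sum_congr rfl fun m hm => (Real.log_zpow _ _).symm
  have hq2 : (r:ℝ) * Real.log q = Real.log ((q:ℝ) ^ r) := (Real.log_zpow _ _).symm
  have hXpos : 0 < ∏ p ∈ Tk, (p:ℝ)^(k p) :=
    Finset.prod_pos fun p hp => zpow_pos (hppos p hp) _
  have hYpos : 0 < ∏ m ∈ Tl, ((m:ℝ)+α)^(l m) :=
    Finset.prod_pos fun m _ => zpow_pos (hmpos m) _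
  have hprodR : (∏ p ∈ Tk, (p:ℝ)^(k p)) * (∏ m ∈ Tl, ((m:ℝ)+α)^(l m)) = (q:ℝ)^r := by
    rw [hk1, hl1, hq2, ← Real.log_mul hXpos.ne' hYpos.ne'] at heq
    have := congrArg Real.exp heq
    rwa [Real.exp_log (by positivity), Real.exp_log (zpow_pos hqR0 r)] at this
  set c : ℚ := q ^ r / ∏ p ∈ Tk, (p:ℚ) ^ (k p) with hcdef
  have hQprodpos : 0 < ∏ p ∈ Tk, (p:ℚ)^(k p) :=
    Finset.prod_pos fun p hp => zpow_pos (by exact_mod_cast hppos p hp) _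
  have hc : c ≠ 0 := by
    rw [hcdef]
    exact div_ne_zero (zpow_ne_zero _ hq0) hQprodpos.ne'
  have hcast : (c:ℝ) = (q:ℝ)^r / ∏ p ∈ Tk, (p:ℝ)^(k p) := by
    rw [hcdef]; push_cast; ring
  have hprodl : ∏ m ∈ Tl, ((m:ℝ)+α)^(l m) = (c:ℝ) := by
    rw [hcast, eq_div_iff hXpos.ne', mul_comm, hprodR]
  have hl0 : ∀ m, l m = 0 := by
    intro m
    by_contra hm
    exact hm (aux_trans9 α hα hα0 Tl l c hc hprodl m (hlfin.mem_toFinset.mpr hm))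
  have hTlone : ∏ m ∈ Tl, ((m:ℝ)+α)^(l m) = 1 := by
    apply Finset.prod_eq_one
    intro m _
    rw [hl0 m, zpow_zero]
  rw [hTlone, mul_one] at hprodR
  have hprodQ : ∏ p ∈ Tk, (p:ℚ)^(k p) = q ^ r := by
    have : ((∏ p ∈ Tk, (p:ℚ)^(k p) : ℚ) : ℝ) = ((q ^ r : ℚ) : ℝ) := by
      push_cast
      exact hprodR
    exact_mod_cast this
  have hk0 : ∀ p, k p = 0 := by
    intro p
    by_contra hp
    exact hp (aux_val9 q hq0 Tk k (fun p' hp' => hksupp p' (hkmem p' hp')) r hprodQ p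
      (hkfin.mem_toFinset.mpr hp))
  refine ⟨hk0, hl0, ?_⟩
  have hTkone : ∏ p ∈ Tk, (p:ℚ)^(k p) = 1 := by
    apply Finset.prod_eq_one
    intro p _
    rw [hk0 p, zpow_zero]
  rw [hTkone] at hprodQ
  have : q ^ r = q ^ (0:ℤ) := by rw [zpow_zero, ← hprodQ]
  exact zpow_right_injective₀ (by positivity) (ne_of_gt hq1') this
end
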